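/- arXiv:1607.04039 — 2 statements merged into one kernel-verified Lean document; each statement's English description precedes it below -/
import Mathlib

section
/- Suppose τ²(1,b₂) ≤ 2(2−p₁)σ²(1+(m−1)ρ)/m and τ²(−1,·) = 2σ²(1+(m−1)ρ)/m, with σ² > 0, m ≥ 1, 0 ≤ p₁ ≤ 1, and 1+(m−1)ρ > 0. Then (z_β+z_{α/2})²(τ²(1,b₂)+τ²(−1,·))/(δ²σ²) ≤ [4(z_β+z_{α/2})²/(mδ²)]·(1+(m−1)ρ)·(1+(1−p₁)/2). That is, the ADEPT sample size formula N = [4(z_β+z_{α/2})²/(mδ²)]·(1+(m−1)ρ)·(1+(1−p₁)/2) is an upper bound for the exact required sample size. -/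
theorem stmt7_general (m : ℕ) (σ2 ρ p1 δ zα zβ τ1sq τ2sq : ℝ)
    (hσ : 0 < σ2)
    (hτ1 : τ1sq ≤ 2 * (2 - p1) * σ2 * (1 + ((m : ℝ) - 1) * ρ) / m)
    (hτ2 : τ2sq = 2 * σ2 * (1 + ((m : ℝ) - 1) * ρ) / m) :
    (zβ + zα)^2 * (τ1sq + τ2sq) / (δ^2 * σ2)
      ≤ 4 * (zβ + zα)^2 / ((m : ℝ) * δ^2) * (1 + ((m : ℝ) - 1) * ρ) * (1 + (1 - p1) / 2) := by
  set deff := 1 + ((m : ℝ) - 1) * ρ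
  have hτ : τ1sq + τ2sq ≤ 2 * (3 - p1) * σ2 * deff / m := by
    rw [hτ2, show 2 * (3 - p1) * σ2 * deff / m
      = 2 * (2 - p1) * σ2 * deff / m + 2 * σ2 * deff / m by ring]
    gcongr
  calc (zβ + zα)^2 * (τ1sq + τ2sq) / (δ^2 * σ2)
      ≤ (zβ + zα)^2 * (2 * (3 - p1) * σ2 * deff / m) / (δ^2 * σ2) := by gcongr
    _ = 4 * (zβ + zα)^2 / ((m : ℝ) * δ^2) * deff * (1 + (1 - p1) / 2) := by
        field_simp
        ring

theorem stmt7 (m : ℕ) (hm : 1 ≤ m) (σ2 ρ p1 δ zα zβ τ1sq τ2sq : ℝ)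
    (hσ : 0 < σ2) (hp0 : 0 ≤ p1) (hp1 : p1 ≤ 1)
    (hρ : 0 < 1 + ((m : ℝ) - 1) * ρ) (hδ : 0 < δ) (hz : 0 < zβ + zα)
    (hτ1 : τ1sq ≤ 2 * (2 - p1) * σ2 * (1 + ((m : ℝ) - 1) * ρ) / m)
    (hτ2 : τ2sq = 2 * σ2 * (1 + ((m : ℝ) - 1) * ρ) / m) :
    (zβ + zα)^2 * (τ1sq + τ2sq) / (δ^2 * σ2)
      ≤ 4 * (zβ + zα)^2 / ((m : ℝ) * δ^2) * (1 + ((m : ℝ) - 1) * ρ) * (1 + (1 - p1) / 2) :=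
  stmt7_general m σ2 ρ p1 δ zα zβ τ1sq τ2sq hσ hτ1 hτ2
end

section
/- Suppose for each cluster i and DTR (a₁,a₂): E_{a₁,a₂}[Y_i | X_i] = μ(X_i, a₁, a₂; θ₀) and Y_{ij} is conditionally independent of X_{ik} (k ≠ j) given X_{ij}. Then the inverse-probability-weighted estimating function U_i(θ) = Σ_{(a₁,a₂)} I_i(a₁,a₂)·W_i·D(X_i,a₁,a₂)ᵀ V(X_i,a₁,a₂)⁻¹ (Y_i − μ(X_i,a₁,a₂;θ)) satisfies E[U_i(θ₀)] = 0 for any fixed working covariance matrices V, where the expectation is under the observed-data distribution. -/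
open MeasureTheory Matrix

/-! For each rule `d`, the weight `I d * W` turns the observed-data expectation into an
expectation under the law of `d`. There each component of the estimating function is a finite
sum `∑ j, c_lj(X) * (Y_j - μ_j(X))`, and every term integrates to zero by the mean model. -/

section MulVec

variable {Ω ι κ : Type*} [MeasurableSpace Ω] [Fintype κ] {μ : Measure Ω}
  (A : Ω → Matrix ι κ ℝ) (v : Ω → κ → ℝ) (i : ι)

theorem integrable_mulVec_apply (h : ∀ j, Integrable (fun ω => A ω i j * v ω j) μ) :
    Integrable (fun ω => (A ω *ᵥ v ω) i) μ := by
  simpa only [mulVec_apply_eq_sum] using integrable_finsetSum _ fun j _ => h j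

theorem integral_mulVec_apply (h : ∀ j, Integrable (fun ω => A ω i j * v ω j) μ) :
    ∫ ω, (A ω *ᵥ v ω) i ∂μ = ∑ j, ∫ ω, A ω i j * v ω j ∂μ := by
  simp only [mulVec_apply_eq_sum]
  exact integral_finsetSum _ fun j _ => h j

end MulVec

theorem stmt14_general {Ω : Type*} [MeasurableSpace Ω] {D : Type*} [Fintype D]
    (m q : ℕ)
    (Pobs : Measure Ω) (P : D → Measure Ω)
    (X Y : Ω → Fin m → ℝ)
    (I : D → Ω → ℝ) (W : Ω → ℝ)
    (muvec : (Fin m → ℝ) → D → Fin m → ℝ)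
    (Dmat : (Fin m → ℝ) → D → Matrix (Fin m) (Fin q) ℝ)
    (Vmat : (Fin m → ℝ) → D → Matrix (Fin m) (Fin m) ℝ)
    -- I d / W is the Radon–Nikodym derivative between the observed-data law and the
    -- law under DTR d: the change-of-measure identity for the weights.
    (hCM : ∀ (d : D) (g : Ω → ℝ), Integrable g (P d) →
      ∫ ω, W ω * I d ω * g ω ∂Pobs = ∫ ω, g ω ∂(P d))
    -- correct specification of the marginal mean model: E_d[Y_j − μ_j(X) | X] = 0,
    -- expressed via orthogonality to every integrable function of X
    (hmean : ∀ (d : D) (j : Fin m) (h : (Fin m → ℝ) → ℝ),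
      Integrable (fun ω => h (X ω) * (Y ω j - muvec (X ω) d j)) (P d) →
      ∫ ω, h (X ω) * (Y ω j - muvec (X ω) d j) ∂(P d) = 0)
    -- regularity: integrability of the estimating-function components
    (hintP : ∀ (d : D) (l : Fin q) (j : Fin m),
      Integrable (fun ω => ((Dmat (X ω) d)ᵀ * (Vmat (X ω) d)⁻¹) l j
        * (Y ω j - muvec (X ω) d j)) (P d))
    (hintObs : ∀ (d : D) (l : Fin q),
      Integrable (fun ω => I d ω * W ω *
        ((((Dmat (X ω) d)ᵀ * (Vmat (X ω) d)⁻¹) *ᵥ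
          (fun j => Y ω j - muvec (X ω) d j)) l)) Pobs) :
    ∀ l : Fin q,
      (∫ ω, ∑ d : D, I d ω * W ω *
        ((((Dmat (X ω) d)ᵀ * (Vmat (X ω) d)⁻¹) *ᵥ
          (fun j => Y ω j - muvec (X ω) d j)) l) ∂Pobs) = 0 := by
  intro l
  rw [integral_finsetSum _ fun d _ => hintObs d l]
  refine Finset.sum_eq_zero fun d _ => ?_
  set C : Ω → Matrix (Fin q) (Fin m) ℝ := fun ω => (Dmat (X ω) d)ᵀ * (Vmat (X ω) d)⁻¹
  set r : Ω → Fin m → ℝ := fun ω j => Y ω j - muvec (X ω) d j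
  calc ∫ ω, I d ω * W ω * (C ω *ᵥ r ω) l ∂Pobs
      = ∫ ω, (C ω *ᵥ r ω) l ∂(P d) := by
        rw [← hCM d _ (integrable_mulVec_apply C r l (hintP d l))]
        simp only [mul_comm (I d _)]
    _ = ∑ j, ∫ ω, C ω l j * r ω j ∂(P d) := integral_mulVec_apply C r l (hintP d l)
    _ = 0 := Finset.sum_eq_zero fun j _ =>
        hmean d j (fun x => ((Dmat x d)ᵀ * (Vmat x d)⁻¹) l j) (hintP d l j)

theorem stmt14 {Ω : Type*} [MeasurableSpace Ω] {D : Type*} [Fintype D]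
    (m q : ℕ)
    (Pobs : Measure Ω) (P : D → Measure Ω) [∀ d, IsProbabilityMeasure (P d)]
    (X Y : Ω → Fin m → ℝ)
    (I : D → Ω → ℝ) (W : Ω → ℝ)
    (muvec : (Fin m → ℝ) → D → Fin m → ℝ)
    (Dmat : (Fin m → ℝ) → D → Matrix (Fin m) (Fin q) ℝ)
    (Vmat : (Fin m → ℝ) → D → Matrix (Fin m) (Fin m) ℝ)
    -- I d / W is the Radon–Nikodym derivative between the observed-data law and the
    -- law under DTR d: the change-of-measure identity for the weights.
    (hCM : ∀ (d : D) (g : Ω → ℝ), Integrable g (P d) →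
      ∫ ω, W ω * I d ω * g ω ∂Pobs = ∫ ω, g ω ∂(P d))
    -- correct specification of the marginal mean model: E_d[Y_j − μ_j(X) | X] = 0,
    -- expressed via orthogonality to every integrable function of X
    (hmean : ∀ (d : D) (j : Fin m) (h : (Fin m → ℝ) → ℝ),
      Integrable (fun ω => h (X ω) * (Y ω j - muvec (X ω) d j)) (P d) →
      ∫ ω, h (X ω) * (Y ω j - muvec (X ω) d j) ∂(P d) = 0)
    -- regularity: integrability of the estimating-function components
    (hintP : ∀ (d : D) (l : Fin q) (j : Fin m),
      Integrable (fun ω => ((Dmat (X ω) d)ᵀ * (Vmat (X ω) d)⁻¹) l j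
        * (Y ω j - muvec (X ω) d j)) (P d))
    (hintObs : ∀ (d : D) (l : Fin q),
      Integrable (fun ω => I d ω * W ω *
        ((((Dmat (X ω) d)ᵀ * (Vmat (X ω) d)⁻¹) *ᵥ
          (fun j => Y ω j - muvec (X ω) d j)) l)) Pobs) :
    ∀ l : Fin q,
      (∫ ω, ∑ d : D, I d ω * W ω *
        ((((Dmat (X ω) d)ᵀ * (Vmat (X ω) d)⁻¹) *ᵥ
          (fun j => Y ω j - muvec (X ω) d j)) l) ∂Pobs) = 0 :=
  stmt14_general m q Pobs P X Y I W muvec Dmat Vmat hCM hmean hintP hintObs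
end
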